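/- Let k be a field of characteristic different from 2 and let D be a commutative k-algebra with dim_k D = 4 admitting a linear functional λ : D → k for which the bilinear form (x,y) ↦ λ(xy) is nondegenerate (a 4-dimensional commutative Frobenius k-algebra). Let (e_1,…,e_4), (f_1,…,f_4) be k-bases of D with λ(e_i f_j) = δ_{ij}, let F := D/k·1 (a 3-dimensional vector space) with quotient map π : D → F, and define ρ : D → F ⊗_k F by ρ(d) = Σ_{i=1}^4 π(d e_i) ⊗ π(f_i). Then the image of ρ is contained in the 6-dimensional space Sym_2(F) of symmetric tensors, ρ is injective, and consequently dim_k (Sym_2(F)/im(ρ)) = 2. -/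

import Mathlib

/-!
Expanding `x * e i` in the basis `f` gives coefficients `Λ (x * e i * e j)`, which are symmetric
in `i` and `j`; hence `∑ i, (x * e i) ⊗ f i` is fixed by the flip of `D ⊗ D`, so `ρ d` is fixed by
the flip of `F ⊗ F` and, `2` being invertible, is a symmetric tensor.

The linear forms on `F` are the `Λ (a * ·)` with `Λ a = 0`, and pairing `ρ d` with two of them
gives `Λ (a * b * d)`. If this vanishes for all `a, b` in the hyperplane `K = ker Λ`, then
nondegeneracy puts `K * d` inside `k · 1`. For `a, b ∈ K` the scalars `a * d` and `b * d` satisfy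
`(a * d) • b = (b * d) • a`, and as `dim K ≥ 2` this forces `K * d = 0`; then `d ∈ k · 1` as well,
and `d = 0`.
-/

open TensorProduct

noncomputable section

variable (k D : Type*) [Field k] [CommRing D] [Algebra k D]

/-- `F := D / k·1`. -/
abbrev FrobQuotF : Type _ := D ⧸ Submodule.span k {(1 : D)}

/-- The quotient map `π : D → F = D/k·1`. -/
def frobPi : D →ₗ[k] FrobQuotF k D := (Submodule.span k {(1 : D)}).mkQ

/-- The map `ρ : D → F ⊗ F`, `d ↦ ∑ i, π (d * e i) ⊗ π (f i)`. -/
def frobRho (e f : Fin 4 → D) : D →ₗ[k] FrobQuotF k D ⊗[k] FrobQuotF k D :=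
  ∑ i : Fin 4,
    ((TensorProduct.mk k (FrobQuotF k D) (FrobQuotF k D)).flip (frobPi k D (f i))).comp
      ((frobPi k D).comp (LinearMap.mulRight k (e i)))

/-- The subspace of symmetric tensors of `F ⊗ F`, spanned by the `u ⊗ v + v ⊗ u`. -/
def symTensors (F : Type*) [AddCommGroup F] [Module k F] : Submodule k (F ⊗[k] F) :=
  Submodule.span k {z | ∃ u v : F, z = u ⊗ₜ[k] v + v ⊗ₜ[k] u}

section

variable {k D}

section DualBases

variable {ι : Type*} [Fintype ι] [DecidableEq ι] {Λ : D →ₗ[k] k} {e f : Module.Basis ι k D}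

theorem repr_eq_apply_mul_of_dual (hdual : ∀ i j, Λ (e i * f j) = if i = j then 1 else 0)
    (x : D) (i : ι) : f.repr x i = Λ (x * e i) := by
  conv_rhs => rw [← f.sum_repr x]
  simp only [Finset.sum_mul, map_sum, smul_mul_assoc, map_smul, mul_comm (f _), hdual,
    smul_eq_mul, mul_ite, mul_one, mul_zero, Finset.sum_ite_eq, Finset.mem_univ, if_true]

theorem sum_apply_mul_smul_of_dual (hdual : ∀ i j, Λ (e i * f j) = if i = j then 1 else 0)
    (x : D) : ∑ i, Λ (x * e i) • f i = x := by
  simpa only [repr_eq_apply_mul_of_dual hdual] using f.sum_repr x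

theorem sum_apply_mul_mul_apply_mul_of_dual
    (hdual : ∀ i j, Λ (e i * f j) = if i = j then 1 else 0) (x y : D) :
    ∑ i, Λ (x * e i) * Λ (y * f i) = Λ (y * x) := by
  conv_rhs => rw [← sum_apply_mul_smul_of_dual hdual x]
  simp only [Finset.mul_sum, map_sum, mul_smul_comm, map_smul, smul_eq_mul]

theorem comm_sum_mul_tmul_of_dual (hdual : ∀ i j, Λ (e i * f j) = if i = j then 1 else 0)
    (x : D) :
    TensorProduct.comm k D D (∑ i, (x * e i) ⊗ₜ f i) = ∑ i, (x * e i) ⊗ₜ[k] f i := by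
  have hexpand : ∑ i, (x * e i) ⊗ₜ f i = ∑ i, ∑ j, Λ (x * e i * e j) • (f j ⊗ₜ[k] f i) :=
    Finset.sum_congr rfl fun i _ => by
      conv_lhs => rw [← sum_apply_mul_smul_of_dual hdual (x * e i)]
      simp only [sum_tmul, smul_tmul']
  rw [hexpand]
  simp only [map_sum, map_smul, comm_tmul]
  rw [Finset.sum_comm]
  simp only [mul_right_comm x]

end DualBases

section SymmetricTensors

variable {F : Type*} [AddCommGroup F] [Module k F]

theorem add_comm_mem_symTensors (t : F ⊗[k] F) :
    t + TensorProduct.comm k F F t ∈ symTensors k F := by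
  induction t using TensorProduct.induction_on with
  | zero => simp
  | tmul u v => exact Submodule.subset_span ⟨u, v, rfl⟩
  | add s t hs ht => simpa only [map_add, add_add_add_comm] using add_mem hs ht

theorem mem_symTensors_of_comm_eq (h2 : (2 : k) ≠ 0) {t : F ⊗[k] F}
    (ht : TensorProduct.comm k F F t = t) : t ∈ symTensors k F := by
  have htwo : t = (2 : k)⁻¹ • (t + TensorProduct.comm k F F t) := by
    rw [ht, ← two_smul k t, smul_smul, inv_mul_cancel₀ h2, one_smul]
  rw [htwo]
  exact Submodule.smul_mem _ _ (add_comm_mem_symTensors t)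

theorem finrank_symTensors (h2 : (2 : k) ≠ 0) {ι : Type*} [Fintype ι] [DecidableEq ι]
    (b : Module.Basis ι k F) :
    Module.finrank k (symTensors k F) = Fintype.card (Sym2 ι) := by
  let g : Sym2 ι → F ⊗[k] F :=
    Sym2.lift ⟨fun i j => b i ⊗ₜ b j + b j ⊗ₜ b i, fun _ _ => add_comm _ _⟩
  have hspan : Submodule.span k (Set.range g) = symTensors k F := by
    apply le_antisymm
    · rw [Submodule.span_le]
      rintro _ ⟨s, rfl⟩
      induction s using Sym2.ind with
      | _ i j => exact Submodule.subset_span ⟨b i, b j, rfl⟩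
    · rw [symTensors, Submodule.span_le]
      rintro _ ⟨u, v, rfl⟩
      let Φ : F →ₗ[k] F →ₗ[k] F ⊗[k] F := TensorProduct.mk k F F + (TensorProduct.mk k F F).flip
      have hΦ : Φ.compr₂ (Submodule.span k (Set.range g)).mkQ = 0 :=
        LinearMap.ext_basis b b fun i j => by
          simp only [Φ, LinearMap.compr₂_apply, LinearMap.add_apply, LinearMap.zero_apply,
            Submodule.mkQ_apply, Submodule.Quotient.mk_eq_zero]
          exact Submodule.subset_span ⟨s(i, j), rfl⟩
      simpa [Φ, ← Submodule.Quotient.mk_add, Submodule.Quotient.mk_eq_zero] using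
        LinearMap.congr_fun₂ hΦ u v
  have hrepr : ∀ (s : Sym2 ι) (i j : ι), (b.tensorProduct b).repr (g s) (i, j) =
      if s = s(i, j) then (if i = j then 2 else 1) else 0 := by
    intro s i j
    induction s using Sym2.ind with
    | _ a c =>
      simp only [g, Sym2.lift_mk, map_add, Finsupp.add_apply,
        Module.Basis.tensorProduct_repr_tmul_apply, Module.Basis.repr_self, Finsupp.single_apply,
        smul_eq_mul, mul_ite, mul_one, mul_zero, Sym2.eq_iff]
      split_ifs <;> grind
  have hli : LinearIndependent k g := by
    refine Fintype.linearIndependent_iff.mpr fun c hc s => ?_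
    induction s using Sym2.ind with
    | _ i j =>
      have hij := congr((b.tensorProduct b).repr $hc (i, j))
      simp only [map_sum, map_smul, Finsupp.coe_finsetSum, Finsupp.coe_smul, Finset.sum_apply,
        Pi.smul_apply, hrepr, smul_eq_mul, mul_ite, mul_zero, Finset.sum_ite_eq',
        Finset.mem_univ, if_true, mul_one, map_zero, Finsupp.coe_zero, Pi.zero_apply] at hij
      split_ifs at hij
      · exact (mul_eq_zero.mp hij).resolve_right h2
      · exact hij
  rw [← hspan, finrank_span_eq_card hli]

end SymmetricTensors

section Frobenius

variable {Λ : D →ₗ[k] k}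

theorem exists_eq_algebraMap_of_forall_ker (hnd : ∀ x : D, (∀ y : D, Λ (x * y) = 0) → x = 0)
    {x : D} (hx : ∀ y, Λ y = 0 → Λ (x * y) = 0) : ∃ t : k, x = algebraMap k D t := by
  have hmem : Λ ∘ₗ LinearMap.mulLeft k x ∈ Submodule.span k (Set.range fun _ : Unit => Λ) :=
    mem_span_of_iInf_ker_le_ker fun y hy => hx y (by simpa using hy)
  obtain ⟨t, ht⟩ := Submodule.mem_span_singleton.mp (by simpa using hmem)
  refine ⟨t, sub_eq_zero.mp (hnd _ fun y => ?_)⟩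
  have hy := LinearMap.congr_fun ht y
  simp only [LinearMap.smul_apply, LinearMap.comp_apply, LinearMap.mulLeft_apply,
    smul_eq_mul] at hy
  rw [sub_mul, map_sub, ← hy, ← Algebra.smul_def, map_smul, smul_eq_mul, sub_self]

theorem mul_eq_zero_of_forall_ker_mul_mul [FiniteDimensional k D]
    (hker : 1 < Module.finrank k (LinearMap.ker Λ))
    (hnd : ∀ x : D, (∀ y : D, Λ (x * y) = 0) → x = 0) {d : D}
    (hd : ∀ a b, Λ a = 0 → Λ b = 0 → Λ (a * b * d) = 0) {a : D} (ha : Λ a = 0) :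
    a * d = 0 := by
  have hscalar : ∀ a, Λ a = 0 → ∃ t : k, a * d = algebraMap k D t := fun a ha =>
    exists_eq_algebraMap_of_forall_ker hnd fun y hy => by rw [mul_right_comm]; exact hd a y ha hy
  obtain ⟨t, ht⟩ := hscalar a ha
  by_contra had
  have ht0 : t ≠ 0 := by rintro rfl; exact had (by simpa using ht)
  have hle : LinearMap.ker Λ ≤ k ∙ a := fun b hb => by
    obtain ⟨s, hs⟩ := hscalar b hb
    have hts : t • b = s • a := by
      rw [Algebra.smul_def, Algebra.smul_def, ← ht, ← hs]
      ring
    exact Submodule.mem_span_singleton.mpr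
      ⟨t⁻¹ * s, by rw [mul_smul, ← hts, smul_smul, inv_mul_cancel₀ ht0, one_smul]⟩
  have := (Submodule.finrank_mono hle).trans (finrank_span_le_card ({a} : Set D))
  simp only [Set.toFinset_singleton, Finset.card_singleton] at this
  omega

theorem eq_zero_of_forall_ker_mul_mul [FiniteDimensional k D] (hD : 2 < Module.finrank k D)
    (hnd : ∀ x : D, (∀ y : D, Λ (x * y) = 0) → x = 0) {d : D}
    (hd : ∀ a b, Λ a = 0 → Λ b = 0 → Λ (a * b * d) = 0) : d = 0 := by
  have hΛ : Λ ≠ 0 := by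
    rintro rfl
    have : Nontrivial D := Module.nontrivial_of_finrank_pos (R := k) (by omega)
    exact one_ne_zero (hnd 1 fun _ => rfl)
  have hker : 1 < Module.finrank k (LinearMap.ker Λ) := by
    have := Module.Dual.finrank_ker_add_one_of_ne_zero hΛ
    omega
  have hann : ∀ a, Λ a = 0 → a * d = 0 := fun _ =>
    mul_eq_zero_of_forall_ker_mul_mul hker hnd hd
  obtain ⟨t, rfl⟩ := exists_eq_algebraMap_of_forall_ker hnd fun y hy => by
    rw [mul_comm, hann y hy, map_zero]
  obtain ⟨a, ha, ha0⟩ := Submodule.exists_mem_ne_zero_of_ne_bot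
    (Submodule.one_le_finrank_iff.mp hker.le)
  have hta : t • a = 0 := by rw [Algebra.smul_def, mul_comm, hann a ha]
  rw [(smul_eq_zero.mp hta).resolve_right ha0, map_zero]

end Frobenius

section Rho

theorem frobRho_apply (e f : Fin 4 → D) (d : D) :
    frobRho k D e f d =
      TensorProduct.map (frobPi k D) (frobPi k D) (∑ i, (d * e i) ⊗ₜ[k] f i) := by
  simp [frobRho, map_sum]

variable {Λ : D →ₗ[k] k} {e f : Module.Basis (Fin 4) k D}

theorem frobRho_mem_symTensors (h2 : (2 : k) ≠ 0)
    (hdual : ∀ i j, Λ (e i * f j) = if i = j then 1 else 0) (d : D) :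
    frobRho k D e f d ∈ symTensors k (FrobQuotF k D) :=
  mem_symTensors_of_comm_eq h2 <| by
    rw [frobRho_apply, ← map_comm, comm_sum_mul_tmul_of_dual hdual]

theorem apply_mul_mul_eq_zero_of_frobRho_eq_zero
    (hdual : ∀ i j, Λ (e i * f j) = if i = j then 1 else 0) {d : D}
    (hd : frobRho k D e f d = 0) {a b : D} (ha : Λ a = 0) (hb : Λ b = 0) :
    Λ (a * b * d) = 0 := by
  have hφ : ∀ c, Λ c = 0 →
      Submodule.span k {(1 : D)} ≤ LinearMap.ker (Λ ∘ₗ LinearMap.mulLeft k c) := fun c hc => by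
    simpa [Submodule.span_le] using hc
  let L := TensorProduct.lift ((LinearMap.mul k k).compl₁₂
    ((Submodule.span k {1}).liftQ _ (hφ a ha)) ((Submodule.span k {1}).liftQ _ (hφ b hb)))
  have hL : ∀ x y, L (frobPi k D x ⊗ₜ frobPi k D y) = Λ (a * x) * Λ (b * y) := fun _ _ => rfl
  calc Λ (a * b * d) = ∑ i, Λ (a * d * e i) * Λ (b * f i) := by
        rw [sum_apply_mul_mul_apply_mul_of_dual hdual, mul_left_comm, mul_assoc]
    _ = L (frobRho k D e f d) := by
        simp only [frobRho_apply, map_sum, map_tmul, hL, mul_assoc]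
    _ = 0 := by rw [hd, map_zero]

theorem frobRho_injective [FiniteDimensional k D] (hD : 2 < Module.finrank k D)
    (hnd : ∀ x : D, (∀ y : D, Λ (x * y) = 0) → x = 0)
    (hdual : ∀ i j, Λ (e i * f j) = if i = j then 1 else 0) :
    Function.Injective (frobRho k D e f) :=
  (injective_iff_map_eq_zero _).mpr fun _ hd => eq_zero_of_forall_ker_mul_mul hD hnd
    fun _ _ ha hb => apply_mul_mul_eq_zero_of_frobRho_eq_zero hdual hd ha hb

theorem finrank_frobQuotF [Module.Finite k D] [Nontrivial D] :
    Module.finrank k (FrobQuotF k D) = Module.finrank k D - 1 := by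
  rw [Submodule.finrank_quotient, finrank_span_singleton one_ne_zero]

end Rho

end

/-- Let `D` be a `4`-dimensional commutative Frobenius algebra over a
field `k` of characteristic ≠ 2, with Frobenius functional `Λ` and `Λ`-dual bases
`(e i)`, `(f i)`.  With `F := D/k·1` (which is `3`-dimensional), `π : D → F` the quotient
map, and `ρ : D → F ⊗ F`, `d ↦ ∑ i, π (d * e i) ⊗ π (f i)`, the image of `ρ` is contained
in the `6`-dimensional space `Sym₂ F` of symmetric tensors, `ρ` is injective, and hence
`dim (Sym₂ F / im ρ) = 2`. -/
theorem rho_injective_symmetric_and_coker_dim_two (h2 : (2 : k) ≠ 0)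
    (hdim : Module.finrank k D = 4)
    (Λ : D →ₗ[k] k) (hnd : ∀ x : D, (∀ y : D, Λ (x * y) = 0) → x = 0)
    (e f : Module.Basis (Fin 4) k D)
    (hdual : ∀ i j, Λ (e i * f j) = if i = j then 1 else 0) :
    LinearMap.range (frobRho k D e f) ≤ symTensors k (FrobQuotF k D) ∧
    Function.Injective (frobRho k D e f) ∧
    Module.finrank k ↥(symTensors k (FrobQuotF k D)) = 6 ∧
    Module.finrank k
      (@HasQuotient.Quotient _ _
        (@Submodule.hasQuotient k ↥(symTensors k (FrobQuotF k D)) _ _ _)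
        ((LinearMap.range (frobRho k D e f)).comap
          (symTensors k (FrobQuotF k D)).subtype)) = 2 := by
  have : Module.Finite k D := Module.finite_of_finrank_eq_succ hdim
  have : Nontrivial D := Module.nontrivial_of_finrank_eq_succ hdim
  have hF : Module.finrank k (FrobQuotF k D) = 3 := by rw [finrank_frobQuotF, hdim]
  have hsym : Module.finrank k (symTensors k (FrobQuotF k D)) = 6 := by
    rw [finrank_symTensors h2 (Module.finBasisOfFinrankEq k _ hF), Sym2.card, Fintype.card_fin]
    rfl
  have hrange : LinearMap.range (frobRho k D e f) ≤ symTensors k (FrobQuotF k D) := by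
    rintro _ ⟨d, rfl⟩
    exact frobRho_mem_symTensors h2 hdual d
  have hinj : Function.Injective (frobRho k D e f) := frobRho_injective (by omega) hnd hdual
  refine ⟨hrange, hinj, hsym, ?_⟩
  have hquot := Submodule.finrank_quotient_add_finrank (R := k)
    (M := symTensors k (FrobQuotF k D)) ((LinearMap.range (frobRho k D e f)).comap (symTensors k (FrobQuotF k D)).subtype)
  rw [hsym, (Submodule.comapSubtypeEquivOfLe hrange).finrank_eq,
    LinearMap.finrank_range_of_inj hinj, hdim] at hquot
  exact Nat.add_right_cancel hquot

end
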